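/- Let v₋, v₊, h > 0, r₋, r₊ ∈ ℝ and λ ∈ ℂ with |λ| = 1. Let σ = [[−(i/2)r₋ + j·conj(λ)·√v₋, −conj(λ)·√(h/2)], [λ·√(h/2), (i/2)r₊ + j·λ·√v₊]] ∈ M₂(ℍ) and let Mσ ∈ M₄(ℂ) be its image under the standard embedding of M₂(ℍ) into M₄(ℂ) obtained by replacing each quaternion entry a + jb (a, b ∈ ℂ) by the 2×2 complex block [[a, −conj(b)], [b, conj(a)]]. Set H₁ = 4h + 4v₋ + 4v₊ + r₋² + r₊², H₂ = (r₋² − r₊² + 4v₋ − 4v₊)² + 8h((r₋ − r₊)² + 4(v₋ + v₊)), C² = h√(v₋v₊) and μ = Re(λ⁴). Then the characteristic polynomial of Mσ equals X⁴ + (H₁/4)X² + (H₁² − H₂ − 64C²μ)/64; equivalently, the eigenvalues of Mσ are ±(i/(2√2))·√(H₁ ± √(H₂ + 64C²μ)). -/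

import Mathlib

noncomputable section

open Matrix Polynomial

/-- The 2×2 complex block `[[a, −conj b], [b, conj a]]` representing the
quaternion `a + j b` under the standard embedding `ℍ → M₂(ℂ)`. -/
def quatBlock (a b : ℂ) : Matrix (Fin 2) (Fin 2) ℂ :=
  !![a, -(starRingEnd ℂ b); b, starRingEnd ℂ a]

/-- The image in `M₄(ℂ)` of the element
`σ = [[−(i/2)r₋ + j conj(λ)√v₋, −conj(λ)√(h/2)], [λ√(h/2), (i/2)r₊ + j λ√v₊]]` of `𝔰𝔭(2)`
under the standard embedding `M₂(ℍ) → M₄(ℂ)`. -/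
def Msigma (vm vp h rm rp : ℝ) (lam : ℂ) :
    Matrix (Fin 2 ⊕ Fin 2) (Fin 2 ⊕ Fin 2) ℂ :=
  Matrix.fromBlocks
    (quatBlock (-(Complex.I / 2) * (rm : ℂ)) (starRingEnd ℂ lam * (Real.sqrt vm : ℂ)))
    (quatBlock (-(starRingEnd ℂ lam) * (Real.sqrt (h / 2) : ℂ)) 0)
    (quatBlock (lam * (Real.sqrt (h / 2) : ℂ)) 0)
    (quatBlock ((Complex.I / 2) * (rp : ℂ)) (lam * (Real.sqrt vp : ℂ)))

set_option maxHeartbeats 2000000 in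
theorem charpoly_of_lax_slice
    (vm vp h : ℝ) (hvm : 0 < vm) (hvp : 0 < vp) (hh : 0 < h)
    (rm rp : ℝ) (lam : ℂ) (hlam : ‖lam‖ = 1) :
    (Msigma vm vp h rm rp lam).charpoly =
      X ^ 4 +
        C (((4 * h + 4 * vm + 4 * vp + rm ^ 2 + rp ^ 2) / 4 : ℝ) : ℂ) * X ^ 2 +
        C ((((4 * h + 4 * vm + 4 * vp + rm ^ 2 + rp ^ 2) ^ 2 -
            ((rm ^ 2 - rp ^ 2 + 4 * vm - 4 * vp) ^ 2 +
              8 * h * ((rm - rp) ^ 2 + 4 * (vm + vp))) -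
            64 * (h * Real.sqrt (vm * vp)) * (lam ^ 4).re) / 64 : ℝ) : ℂ) := by
  have hM : Msigma vm vp h rm rp lam =
      (!![-(Complex.I / 2) * rm, -(lam * (Real.sqrt vm : ℂ)), -(starRingEnd ℂ lam * (Real.sqrt (h/2) : ℂ)), 0;
         starRingEnd ℂ lam * (Real.sqrt vm : ℂ), (Complex.I / 2) * rm, 0, -(lam * (Real.sqrt (h/2) : ℂ));
         lam * (Real.sqrt (h/2) : ℂ), 0, (Complex.I / 2) * rp, -(starRingEnd ℂ lam * (Real.sqrt vp : ℂ));
         0, starRingEnd ℂ lam * (Real.sqrt (h/2) : ℂ), lam * (Real.sqrt vp : ℂ), -((Complex.I / 2) * rp)]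
        : Matrix (Fin 4) (Fin 4) ℂ).reindex finSumFinEquiv.symm finSumFinEquiv.symm := by
    ext i j
    rcases i with i | i <;> rcases j with j | j <;> fin_cases i <;> fin_cases j <;>
      simp only [Msigma, quatBlock, Matrix.reindex_apply, Matrix.submatrix_apply,
        Equiv.symm_symm, finSumFinEquiv_apply_left, finSumFinEquiv_apply_right,
        Matrix.fromBlocks, Matrix.of_apply, Sum.elim_inl, Sum.elim_inr,
        _root_.map_mul, map_neg, map_div₀, map_ofNat, Complex.conj_I, Complex.conj_conj,
        Complex.conj_ofReal,
        Matrix.cons_val', Matrix.cons_val_zero, Matrix.cons_val_one, Matrix.head_cons,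
        Matrix.empty_val', Matrix.cons_val_fin_one, Matrix.head_fin_const, map_zero, neg_zero,
        Fin.isValue] <;>
      norm_num [Fin.castAdd, Fin.natAdd, Fin.castLE] <;>
      try ring
  rw [hM, Matrix.charpoly_reindex, Matrix.charpoly]
  set sm := Real.sqrt vm with hsm_def
  set sp := Real.sqrt vp with hsp_def
  set sh := Real.sqrt (h/2) with hsh_def
  set sq := Real.sqrt (vm * vp) with hsq_def
  have hI : Complex.I ^ 2 = -1 := Complex.I_sq
  have hab : lam * starRingEnd ℂ lam = 1 := by
    rw [Complex.mul_conj, Complex.normSq_eq_norm_sq, hlam]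
    norm_num
  have hm : ((sm : ℝ) : ℂ) ^ 2 = (vm : ℂ) := by
    rw [hsm_def, ← Complex.ofReal_pow, Real.sq_sqrt hvm.le]
  have hp : ((sp : ℝ) : ℂ) ^ 2 = (vp : ℂ) := by
    rw [hsp_def, ← Complex.ofReal_pow, Real.sq_sqrt hvp.le]
  have hsh : ((sh : ℝ) : ℂ) ^ 2 = (h : ℂ) / 2 := by
    rw [hsh_def, ← Complex.ofReal_pow, Real.sq_sqrt (by positivity)]
    push_cast; ring
  have hq : ((sm : ℝ) : ℂ) * ((sp : ℝ) : ℂ) = ((sq : ℝ) : ℂ) := by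
    rw [hsm_def, hsp_def, hsq_def, ← Complex.ofReal_mul, ← Real.sqrt_mul hvm.le]
  have hre : lam ^ 4 + (starRingEnd ℂ lam) ^ 4 = 2 * (((lam ^ 4).re : ℝ) : ℂ) := by
    rw [← map_pow, Complex.add_conj]
    push_cast; ring
  clear_value sm sp sh sq
  clear hsm_def hsp_def hsh_def hsq_def
  apply Polynomial.funext
  intro x
  simp [Matrix.det_succ_row_zero, Fin.sum_univ_succ, charmatrix_apply, Matrix.submatrix_apply,
    Matrix.diagonal_apply, Fin.succAbove, eval_add, eval_sub, eval_mul, eval_neg, eval_pow]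
  linear_combination
    (-(1/4 : ℂ) * rp^2 * x^2 - (1/4) * rm^2 * x^2 - (1/16) * rm^2 * rp^2
      + (1/16) * rm^2 * rp^2 * Complex.I^2
      - (1/2) * lam * starRingEnd ℂ lam * ((sh : ℝ) : ℂ)^2 * rm * rp
      - (1/4) * lam * starRingEnd ℂ lam * ((sp : ℝ) : ℂ)^2 * rm^2
      - (1/4) * lam * starRingEnd ℂ lam * ((sm : ℝ) : ℂ)^2 * rp^2) * hI
    + ((vm : ℂ) * vp + (1/2) * ((sh : ℝ) : ℂ)^2 * h
      + 2 * ((sh : ℝ) : ℂ)^2 * x^2 + (1/2) * ((sh : ℝ) : ℂ)^2 * rm * rp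
      + ((sp : ℝ) : ℂ)^2 * x^2 + (1/4) * ((sp : ℝ) : ℂ)^2 * rm^2
      + ((sm : ℝ) : ℂ)^2 * x^2 + (1/4) * ((sm : ℝ) : ℂ)^2 * rp^2
      + lam * starRingEnd ℂ lam * ((sh : ℝ) : ℂ)^4
      + lam * starRingEnd ℂ lam * ((sm : ℝ) : ℂ)^2 * ((sp : ℝ) : ℂ)^2) * hab
    + (x^2 + (1/4 : ℂ) * rp^2 + lam * starRingEnd ℂ lam * ((sp : ℝ) : ℂ)^2) * hm
    + (x^2 + (1/4 : ℂ) * rm^2 + lam * starRingEnd ℂ lam * (vm : ℂ)) * hp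
    + ((1/2 : ℂ) * h + 2 * x^2 + (1/2) * rm * rp
      - (starRingEnd ℂ lam)^4 * ((sm : ℝ) : ℂ) * ((sp : ℝ) : ℂ)
      + lam * starRingEnd ℂ lam * ((sh : ℝ) : ℂ)^2
      - lam^4 * ((sm : ℝ) : ℂ) * ((sp : ℝ) : ℂ)) * hsh
    + (-(1/2 : ℂ) * (starRingEnd ℂ lam)^4 * h - (1/2) * lam^4 * h) * hq
    + (-(1/2 : ℂ) * h * ((sq : ℝ) : ℂ)) * hre
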